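/- arXiv:1407.6783 — 8 statements merged into one kernel-verified Lean document; each statement's English description precedes it below -/
import Mathlib

section
/- Let z be a complex number with z ≠ 0, z ≠ 1 and z ≠ -1, and let l be a natural number. Then Σ_{k=0}^{l} (l - 2k)·z^{l-2k} = ( l·(z^{l+2} - z^{-(l+2)}) - (l+2)·(z^{l} - z^{-l}) ) / (z - z⁻¹)², where the exponents l-2k, ±(l+2), ±l are taken as integer powers of z and the coefficients l-2k are integers cast to ℂ. -/
lemma aux_sum (x : ℂ) (l : ℕ) :
    (∑ k ∈ Finset.range (l + 1), (((l : ℤ) - 2 * (k : ℤ) : ℤ) : ℂ) * x ^ (l - k)) * (x - 1) ^ 2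
      = (l : ℂ) * (x ^ (l + 2) - 1) - ((l : ℂ) + 2) * (x ^ (l + 1) - x) := by
  induction l with
  | zero => simp
  | succ l ih =>
    have hg : (∑ i ∈ Finset.range (l + 1), x ^ i) * (x - 1) = x ^ (l + 1) - 1 :=
      geom_sum_mul x (l + 1)
    have hrefl : (∑ k ∈ Finset.range (l + 1), x ^ (l - k))
        = ∑ i ∈ Finset.range (l + 1), x ^ i := by
      have := Finset.sum_range_reflect (fun i => x ^ i) (l + 1)
      simpa using this
    rw [Finset.sum_range_succ]
    have hsum : ∑ k ∈ Finset.range (l + 1),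
        ((((l + 1 : ℕ) : ℤ) - 2 * (k : ℤ) : ℤ) : ℂ) * x ^ (l + 1 - k)
        = x * ((∑ k ∈ Finset.range (l + 1), (((l : ℤ) - 2 * (k : ℤ) : ℤ) : ℂ) * x ^ (l - k))
            + ∑ k ∈ Finset.range (l + 1), x ^ (l - k)) := by
      rw [mul_add, Finset.mul_sum, Finset.mul_sum, ← Finset.sum_add_distrib]
      apply Finset.sum_congr rfl
      intro k hk
      have hkl : k ≤ l := Nat.lt_succ_iff.mp (Finset.mem_range.mp hk)
      have h1 : l + 1 - k = (l - k) + 1 := by omega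
      rw [h1]
      push_cast
      ring
    rw [hsum, hrefl]
    simp only [Nat.sub_self, pow_zero]
    push_cast at ih ⊢
    linear_combination x * ih + x * (x - 1) * hg

theorem stmt_0 (z : ℂ) (hz0 : z ≠ 0) (hz1 : z ≠ 1) (hzm1 : z ≠ -1) (l : ℕ) :
    ∑ k ∈ Finset.range (l + 1), (((l : ℤ) - 2 * (k : ℤ) : ℤ) : ℂ) * z ^ ((l : ℤ) - 2 * (k : ℤ)) =
      ((l : ℂ) * (z ^ ((l : ℤ) + 2) - z ^ (-((l : ℤ) + 2)))
        - ((l : ℂ) + 2) * (z ^ (l : ℤ) - z ^ (-(l : ℤ)))) / (z - z⁻¹) ^ 2 := by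
  have hx1 : z ^ 2 - 1 ≠ 0 := by
    intro h
    have : (z - 1) * (z + 1) = 0 := by ring_nf; linear_combination h
    rcases mul_eq_zero.mp this with h' | h'
    · exact hz1 (by linear_combination h')
    · exact hzm1 (by linear_combination h')
  have key := aux_sum (z ^ 2) l
  -- rewrite LHS
  have hL : ∑ k ∈ Finset.range (l + 1), (((l : ℤ) - 2 * (k : ℤ) : ℤ) : ℂ) * z ^ ((l : ℤ) - 2 * (k : ℤ))
      = z ^ (-(l : ℤ)) * ∑ k ∈ Finset.range (l + 1),
          (((l : ℤ) - 2 * (k : ℤ) : ℤ) : ℂ) * (z ^ 2) ^ (l - k) := by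
    rw [Finset.mul_sum]
    apply Finset.sum_congr rfl
    intro k hk
    have hkl : k ≤ l := Nat.lt_succ_iff.mp (Finset.mem_range.mp hk)
    have he : (l : ℤ) - 2 * (k : ℤ) = -(l : ℤ) + 2 * ((l - k : ℕ) : ℤ) := by
      push_cast [Nat.cast_sub hkl]; ring
    rw [he, zpow_add₀ hz0]
    rw [show (2 * ((l - k : ℕ) : ℤ)) = (((2 * (l - k) : ℕ)) : ℤ) by push_cast; ring,
      zpow_natCast, pow_mul]
    ring
  rw [hL]
  have hS : (∑ k ∈ Finset.range (l + 1), (((l : ℤ) - 2 * (k : ℤ) : ℤ) : ℂ) * (z ^ 2) ^ (l - k))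
      = ((l : ℂ) * ((z ^ 2) ^ (l + 2) - 1) - ((l : ℂ) + 2) * ((z ^ 2) ^ (l + 1) - z ^ 2))
        / (z ^ 2 - 1) ^ 2 := by
    rw [eq_div_iff (pow_ne_zero 2 hx1)]
    exact key
  rw [hS]
  -- now pure zpow/pow algebra
  have hzl : z ^ (l : ℤ) = z ^ l := zpow_natCast z l
  have hzml : z ^ (-(l : ℤ)) = (z ^ l)⁻¹ := by rw [zpow_neg, hzl]
  have hzl2 : z ^ ((l : ℤ) + 2) = z ^ l * z ^ 2 := by
    rw [zpow_add₀ hz0, hzl, zpow_two]; ring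
  have hzml2 : z ^ (-((l : ℤ) + 2)) = (z ^ l * z ^ 2)⁻¹ := by
    rw [zpow_neg, hzl2]
  have e1 : (z ^ 2) ^ (l + 2) = (z ^ l) ^ 2 * z ^ 4 := by
    rw [← pow_mul, ← pow_mul, ← pow_add]; congr 1; ring
  have e2 : (z ^ 2) ^ (l + 1) = (z ^ l) ^ 2 * z ^ 2 := by
    rw [← pow_mul, ← pow_mul, ← pow_add]; congr 1; ring
  have hzln : z ^ l ≠ 0 := pow_ne_zero l hz0
  have hzz : z - z⁻¹ ≠ 0 := by
    intro h
    apply hx1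
    field_simp at h
    linear_combination h
  rw [eq_div_iff (pow_ne_zero 2 hzz), e1, e2]
  rw [hzml, hzl2, hzml2, hzl]
  field_simp
end

section
/- Let z be a complex number with |z| = 1, z ≠ 1 and z ≠ -1, and let l be a natural number. Then |Σ_{k=0}^{l} (l - 2k)·z^{l-2k}| ≤ (4l + 4)/|z - z⁻¹|², where the exponents l-2k are taken as integer powers of z. -/
/-!
Multiply by `u = z - z⁻¹`. Then `u * ∑ z ^ (m - 2k)` telescopes to a difference of two powers
(the Weyl character formula), and summation by parts gives
`u * ∑ (l - 2k) z ^ (l - 2k) = l (z ^ (l+1) + z ^ (-(l+1))) - 2 χ_{l-1}(z)`.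
Multiplying by `u` once more removes the character:
`u² * ∑ (l - 2k) z ^ (l - 2k) = l (z ^ (l+1) + z ^ (-(l+1))) u - 2 (z ^ l - z ^ (-l))`.
On the unit circle all powers of `z` have norm `1` and `‖u‖ ≤ 2`, so the right side has norm at
most `4l + 4`.
-/

open Finset

section Field

variable {K : Type*} [Field K] {z : K}

theorem sub_inv_mul_sum_zpow (hz : z ≠ 0) (m : ℤ) (n : ℕ) :
    (z - z⁻¹) * ∑ k ∈ range n, z ^ (m - 2 * k) = z ^ (m + 1) - z ^ (m + 1 - 2 * n) := by
  rw [mul_sum]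
  convert sum_range_sub' (fun k : ℕ ↦ z ^ (m + 1 - 2 * k)) n using 2 with k
  · rw [show m + 1 - 2 * ((k + 1 : ℕ) : ℤ) = m - 2 * k - 1 by push_cast; ring,
      show m + 1 - 2 * (k : ℤ) = m - 2 * k + 1 by ring, zpow_add_one₀ hz, zpow_sub_one₀ hz]
    ring
  · simp

theorem sub_inv_mul_sum_intCast_mul_zpow (hz : z ≠ 0) (m : ℤ) (n : ℕ) :
    (z - z⁻¹) * ∑ k ∈ range n, ((m - 2 * k : ℤ) : K) * z ^ (m - 2 * k) =
      m * z ^ (m + 1) - ((m - 2 * n : ℤ) : K) * z ^ (m + 1 - 2 * n) -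
        2 * ∑ k ∈ range n, z ^ (m - 1 - 2 * k) := by
  let g : ℕ → K := fun k ↦ ((m - 2 * k : ℤ) : K) * z ^ (m + 1 - 2 * k)
  have hterm : ∀ k : ℕ, (z - z⁻¹) * (((m - 2 * k : ℤ) : K) * z ^ (m - 2 * k)) =
      g k - g (k + 1) - 2 * z ^ (m - 1 - 2 * k) := by
    intro k
    simp only [g]
    rw [show m + 1 - 2 * ((k + 1 : ℕ) : ℤ) = m - 2 * k - 1 by push_cast; ring,
      show m + 1 - 2 * (k : ℤ) = m - 2 * k + 1 by ring,
      show m - 1 - 2 * (k : ℤ) = m - 2 * k - 1 by ring, zpow_add_one₀ hz, zpow_sub_one₀ hz]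
    push_cast
    ring
  rw [mul_sum, sum_congr rfl fun k _ ↦ hterm k, sum_sub_distrib, sum_range_sub', ← mul_sum]
  simp [g]

theorem sub_inv_sq_mul_sum_intCast_mul_zpow (hz : z ≠ 0) (l : ℕ) :
    (z - z⁻¹) ^ 2 * ∑ k ∈ range (l + 1), ((l - 2 * k : ℤ) : K) * z ^ ((l : ℤ) - 2 * k) =
      l * (z ^ ((l : ℤ) + 1) + z ^ (-((l : ℤ) + 1))) * (z - z⁻¹) -
        2 * (z ^ (l : ℤ) - z ^ (-(l : ℤ))) := by
  have hweighted := sub_inv_mul_sum_intCast_mul_zpow hz l (l + 1)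
  have hchar := sub_inv_mul_sum_zpow hz ((l : ℤ) - 1) l
  rw [sum_range_succ (fun k : ℕ ↦ z ^ ((l : ℤ) - 1 - 2 * k))] at hweighted
  have e₁ : (l : ℤ) + 1 - 2 * ((l + 1 : ℕ) : ℤ) = -((l : ℤ) + 1) := by push_cast; ring
  have e₂ : (l : ℤ) - 1 - 2 * (l : ℤ) = -((l : ℤ) + 1) := by ring
  have e₃ : (l : ℤ) - 1 + 1 - 2 * (l : ℤ) = -(l : ℤ) := by ring
  have e₄ : (((l : ℤ) - 2 * ((l + 1 : ℕ) : ℤ) : ℤ) : K) = -((l : K) + 2) := by push_cast; ring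
  rw [e₁, e₂, e₄, Int.cast_natCast] at hweighted
  rw [e₃, sub_add_cancel] at hchar
  linear_combination (z - z⁻¹) * hweighted - 2 * hchar

theorem sub_inv_ne_zero (hz : z ≠ 0) (h₁ : z ≠ 1) (h₂ : z ≠ -1) : z - z⁻¹ ≠ 0 := by
  intro h
  have hsq : z * z = 1 := by nth_rw 2 [sub_eq_zero.mp h]; exact mul_inv_cancel₀ hz
  exact (mul_self_eq_one_iff.mp hsq).elim h₁ h₂

end Field

section NormedField

variable {K : Type*} [NormedField K] {z : K}

theorem norm_natCast_le_self (n : ℕ) : ‖(n : K)‖ ≤ n := by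
  simpa using Nat.norm_cast_le (α := K) n

theorem norm_zpow_add_zpow_le_two (hz : ‖z‖ = 1) (m n : ℤ) : ‖z ^ m + z ^ n‖ ≤ 2 := by
  simpa [norm_zpow, hz, one_add_one_eq_two] using norm_add_le (z ^ m) (z ^ n)

theorem norm_zpow_sub_zpow_le_two (hz : ‖z‖ = 1) (m n : ℤ) : ‖z ^ m - z ^ n‖ ≤ 2 := by
  simpa [norm_zpow, hz, one_add_one_eq_two] using norm_sub_le (z ^ m) (z ^ n)

theorem norm_sum_intCast_mul_zpow_mul_norm_sub_inv_sq_le (hz : ‖z‖ = 1) (l : ℕ) :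
    ‖∑ k ∈ range (l + 1), ((l - 2 * k : ℤ) : K) * z ^ ((l : ℤ) - 2 * k)‖ * ‖z - z⁻¹‖ ^ 2 ≤
      4 * l + 4 := by
  have hz₀ : z ≠ 0 := norm_ne_zero_iff.mp (hz ▸ one_ne_zero)
  have hu : ‖z - z⁻¹‖ ≤ 2 := by simpa using norm_zpow_sub_zpow_le_two hz 1 (-1)
  calc _ = ‖(z - z⁻¹) ^ 2 *
          ∑ k ∈ range (l + 1), ((l - 2 * k : ℤ) : K) * z ^ ((l : ℤ) - 2 * k)‖ := by
        rw [norm_mul, norm_pow, mul_comm]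
    _ = ‖l * (z ^ ((l : ℤ) + 1) + z ^ (-((l : ℤ) + 1))) * (z - z⁻¹) -
          2 * (z ^ (l : ℤ) - z ^ (-(l : ℤ)))‖ := by
        rw [sub_inv_sq_mul_sum_intCast_mul_zpow hz₀]
    _ ≤ l * 2 * 2 + 2 * 2 := by
        refine (norm_sub_le _ _).trans (add_le_add ?_ ?_) <;> rw [norm_mul]
        · rw [norm_mul]
          gcongr
          · exact norm_natCast_le_self l
          · exact norm_zpow_add_zpow_le_two hz _ _
        · gcongr
          · simpa using norm_natCast_le_self (K := K) 2
          · exact norm_zpow_sub_zpow_le_two hz _ _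
    _ = 4 * l + 4 := by ring

end NormedField

theorem stmt_1 (z : ℂ) (hz : ‖z‖ = 1) (hz1 : z ≠ 1) (hzm1 : z ≠ -1) (l : ℕ) :
    ‖∑ k ∈ Finset.range (l + 1),
        (((l : ℤ) - 2 * (k : ℤ) : ℤ) : ℂ) * z ^ ((l : ℤ) - 2 * (k : ℤ))‖
      ≤ (4 * (l : ℝ) + 4) / ‖z - z⁻¹‖ ^ 2 := by
  have hz₀ : z ≠ 0 := norm_ne_zero_iff.mp (hz ▸ one_ne_zero)
  have hu : 0 < ‖z - z⁻¹‖ ^ 2 := pow_pos (norm_pos_iff.mpr (sub_inv_ne_zero hz₀ hz1 hzm1)) 2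
  rw [le_div_iff₀ hu]
  exact norm_sum_intCast_mul_zpow_mul_norm_sub_inv_sq_le hz l
end

section
/- Let z be a complex number that is transcendental over ℚ, let n ≥ 1, let m_1, …, m_n be positive integers, and let l_1 < l_2 < ⋯ < l_n be natural numbers with l_n ≥ 1. Then Σ_{j=1}^{n} m_j · Σ_{k=0}^{l_j} (l_j - 2k)·z^{l_j - 2k} ≠ 0, where the exponents l_j - 2k are taken as integer powers of z. -/
open Polynomial

theorem stmt_3 (z : ℂ) (hz : Transcendental ℚ z) (n : ℕ) (hn : 1 ≤ n)
    (m : Fin n → ℕ) (hm : ∀ j, 0 < m j)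
    (l : Fin n → ℕ) (hl : StrictMono l)
    (hlast : 1 ≤ l ⟨n - 1, by omega⟩) :
    ∑ j : Fin n, (m j : ℂ) *
        ∑ k ∈ Finset.range (l j + 1),
          (((l j : ℤ) - 2 * (k : ℤ) : ℤ) : ℂ) * z ^ ((l j : ℤ) - 2 * (k : ℤ)) ≠ 0 := by
  intro hS
  have hz0 : z ≠ 0 := fun h => hz (h ▸ isAlgebraic_zero)
  set last : Fin n := ⟨n - 1, by omega⟩ with hlastdef
  set L := l last with hL
  have hjL : ∀ j : Fin n, l j ≤ L := fun j =>
    hl.monotone (by rw [Fin.le_def]; simp [hlastdef]; omega)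
  set P : Polynomial ℚ := ∑ j : Fin n, ∑ k ∈ Finset.range (l j + 1),
      Polynomial.monomial (L + l j - 2*k) ((m j : ℚ) * (((l j : ℤ) - 2*(k:ℤ) : ℤ) : ℚ))
    with hP
  have hcoeff : P.coeff (2*L) = (m last : ℚ) * (L : ℚ) := by
    rw [hP]
    simp only [Polynomial.finset_sum_coeff, Polynomial.coeff_monomial]
    rw [Finset.sum_eq_single last]
    · rw [Finset.sum_eq_single 0]
      · have h1 : L + l last - 2*0 = 2*L := by omega
        rw [if_pos h1]
        push_cast
        ring
      · intro k hk hk0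
        have hkl : k < l last + 1 := Finset.mem_range.mp hk
        rw [if_neg (by omega)]
      · intro h; exact absurd (Finset.mem_range.mpr (by omega)) h
    · intro j _ hjne
      apply Finset.sum_eq_zero
      intro k hk
      have hkl : k < l j + 1 := Finset.mem_range.mp hk
      have hjlt : l j < L := lt_of_le_of_ne (hjL j) (fun h => hjne (hl.injective h))
      rw [if_neg (by omega)]
    · intro h; exact absurd (Finset.mem_univ last) h
  have hP0 : P ≠ 0 := by
    intro h
    rw [h, Polynomial.coeff_zero] at hcoeff
    have h1 := hm last
    have h2 : (1:ℕ) ≤ L := hlast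
    have : (m last : ℚ) * (L : ℚ) ≠ 0 := by
      apply mul_ne_zero <;> exact_mod_cast (by omega : _)
    exact this hcoeff.symm
  have heval : (Polynomial.aeval z) P = z ^ L *
      ∑ j : Fin n, (m j : ℂ) *
        ∑ k ∈ Finset.range (l j + 1),
          (((l j : ℤ) - 2 * (k : ℤ) : ℤ) : ℂ) * z ^ ((l j : ℤ) - 2 * (k : ℤ)) := by
    rw [hP, map_sum, Finset.mul_sum]
    apply Finset.sum_congr rfl
    intro j _
    rw [map_sum, Finset.mul_sum, Finset.mul_sum]
    apply Finset.sum_congr rfl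
    intro k hk
    have hkl : k < l j + 1 := Finset.mem_range.mp hk
    rw [Polynomial.aeval_monomial]
    have hzp : z ^ (L + l j - 2*k) = z ^ (L:ℕ) * z ^ ((l j : ℤ) - 2*(k:ℤ)) := by
      have h1 : ((L + l j - 2*k : ℕ) : ℤ) = (L:ℤ) + ((l j : ℤ) - 2*(k:ℤ)) := by
        have := hjL j; push_cast [Nat.cast_sub (by omega : 2*k ≤ L + l j)]; ring
      calc z ^ (L + l j - 2*k) = z ^ ((L + l j - 2*k : ℕ) : ℤ) := (zpow_natCast z _).symm
        _ = z ^ ((L:ℤ) + ((l j : ℤ) - 2*(k:ℤ))) := by rw [h1]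
        _ = z ^ ((L:ℤ)) * z ^ ((l j : ℤ) - 2*(k:ℤ)) := zpow_add₀ hz0 _ _
        _ = z ^ (L:ℕ) * z ^ ((l j : ℤ) - 2*(k:ℤ)) := by rw [zpow_natCast]
    rw [hzp]
    push_cast
    norm_num
    ring
  exact hz ⟨P, hP0, by rw [heval, hS, mul_zero]⟩
end

section
/- Let G be a group, T a normal abelian subgroup of G, a ∈ G and t ∈ T. Then the conjugacy class of a·t in G satisfies { g·(a·t)·g⁻¹ : g ∈ G } = { (b·a·b⁻¹)·(b·t·b⁻¹)·r : b ∈ G, r ∈ R_{b·a·b⁻¹} }. -/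
theorem stmt_7 (G : Type*) [Group G] (T : Subgroup G) (hN : T.Normal)
    (hab : ∀ x ∈ T, ∀ y ∈ T, x * y = y * x) (a : G) (t : G) (ht : t ∈ T) :
    {y | ∃ g : G, y = g * (a * t) * g⁻¹} =
      {y | ∃ b : G, ∃ r ∈ {g | ∃ s ∈ T, g = s⁻¹ * (b * a * b⁻¹)⁻¹ * s * (b * a * b⁻¹)},
        y = (b * a * b⁻¹) * (b * t * b⁻¹) * r} := by
  ext y
  constructor
  · rintro ⟨g, rfl⟩
    exact ⟨g, 1, ⟨1, T.one_mem, by group⟩, by group⟩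
  · rintro ⟨b, r, ⟨s, hs, rfl⟩, rfl⟩
    refine ⟨s * b, ?_⟩
    have hu : b * t * b⁻¹ ∈ T := hN.conj_mem t ht b
    have hx : (b * a * b⁻¹)⁻¹ * s * (b * a * b⁻¹) ∈ T := by
      have := hN.conj_mem s hs (b * a * b⁻¹)⁻¹
      simpa using this
    have hcomm := hab _ hx _ (T.mul_mem hu (T.inv_mem hs))
    calc (b * a * b⁻¹) * (b * t * b⁻¹) * (s⁻¹ * (b * a * b⁻¹)⁻¹ * s * (b * a * b⁻¹))
        = (b * a * b⁻¹) * ((b * t * b⁻¹ * s⁻¹) * ((b * a * b⁻¹)⁻¹ * s * (b * a * b⁻¹))) := by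
          group
      _ = (b * a * b⁻¹) * (((b * a * b⁻¹)⁻¹ * s * (b * a * b⁻¹)) * (b * t * b⁻¹ * s⁻¹)) := by
          rw [hcomm]
      _ = s * b * (a * t) * (s * b)⁻¹ := by group
end

section
/- Let G be a group, T a normal abelian subgroup of G of finite index, H a subgroup of G with H ≤ T, and a ∈ G. Then the union of the conjugates of the coset a·H, namely the set { g·(a·h)·g⁻¹ : g ∈ G, h ∈ H }, is a finite union of left cosets of subgroups of G: there exist finitely many elements c_1, …, c_m of G and subgroups K_1, …, K_m of G (each contained in T) such that { g·(a·h)·g⁻¹ : g ∈ G, h ∈ H } = ⋃_{i=1}^{m} c_i·K_i. -/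
/-!
Write `g = b * t` with `b` a representative of `g T` and `t ∈ T`. Since `T` is normal and
abelian, `t ↦ ⁅a⁻¹, t⁆` is a homomorphism on `T`, and `t (a h) t⁻¹ = a (⁅a⁻¹, t⁆ h)` for
`h ∈ H`. Its range commutes with `H`, so together they span a subgroup `L ≤ T` consisting of
the products `⁅a⁻¹, t⁆ h`; hence the `T`-conjugates of `a H` form exactly the coset `a L`, and
conjugating by `b` yields `(b a b⁻¹) (b L b⁻¹)`, which depends only on `b T`.
-/

open scoped commutatorElement

namespace Subgroup

variable {G : Type*} [Group G] {T : Subgroup G}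

def commutatorHom (hN : T.Normal) (hab : ∀ x ∈ T, ∀ y ∈ T, x * y = y * x) (x : G) :
    T →* G where
  toFun t := ⁅x, (t : G)⁆
  map_one' := by simp
  map_mul' := by
    rintro ⟨s, hs⟩ ⟨t, ht⟩
    have hxt : x * t * x⁻¹ * t⁻¹ ∈ T := mul_mem (hN.conj_mem t ht x) (inv_mem ht)
    simp only [commutatorElement_def, MulMemClass.mk_mul_mk]
    calc x * (s * t) * x⁻¹ * (s * t)⁻¹ = x * s * x⁻¹ * ((x * t * x⁻¹ * t⁻¹) * s⁻¹) := by group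
      _ = x * s * x⁻¹ * (s⁻¹ * (x * t * x⁻¹ * t⁻¹)) := by rw [hab _ hxt _ (inv_mem hs)]
      _ = x * s * x⁻¹ * s⁻¹ * (x * t * x⁻¹ * t⁻¹) := by group

theorem commutatorHom_range_le (hN : T.Normal) (hab : ∀ x ∈ T, ∀ y ∈ T, x * y = y * x)
    (x : G) : (commutatorHom hN hab x).range ≤ T := by
  rintro _ ⟨⟨t, ht⟩, rfl⟩
  exact mul_mem (hN.conj_mem t ht x) (inv_mem ht)

theorem conj_mul_eq_mul_commutatorElement (a : G) {t h : G} (hth : Commute t h) :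
    t * (a * h) * t⁻¹ = a * (⁅a⁻¹, t⁆ * h) := by
  calc t * (a * h) * t⁻¹ = t * a * (h * t⁻¹) := by group
    _ = t * a * (t⁻¹ * h) := by rw [hth.inv_left.eq]
    _ = a * (⁅a⁻¹, t⁆ * h) := by rw [commutatorElement_def]; group

/-- The paper's `H R_a`, with `R_a = {⁅a⁻¹, t⁆ : t ∈ T}`. -/
def conjOrbitSubgroup (hN : T.Normal) (hab : ∀ x ∈ T, ∀ y ∈ T, x * y = y * x)
    (H : Subgroup G) (a : G) : Subgroup G :=
  (commutatorHom hN hab a⁻¹).range ⊔ H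

section

variable (hN : T.Normal) (hab : ∀ x ∈ T, ∀ y ∈ T, x * y = y * x) {H : Subgroup G} (a : G)

theorem conjOrbitSubgroup_le (hHT : H ≤ T) : conjOrbitSubgroup hN hab H a ≤ T :=
  sup_le (commutatorHom_range_le hN hab a⁻¹) hHT

theorem mem_conjOrbitSubgroup_iff (hHT : H ≤ T) {l : G} :
    l ∈ conjOrbitSubgroup hN hab H a ↔ ∃ t ∈ T, ∃ h ∈ H, ⁅a⁻¹, t⁆ * h = l := by
  have hH : H ≤ normalizer (commutatorHom hN hab a⁻¹).range :=
    le_trans (fun h hh ↦ mem_centralizer_iff.mpr fun r hr ↦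
      hab r (commutatorHom_range_le hN hab a⁻¹ hr) h (hHT hh)) (centralizer_le_normalizer _)
  rw [← SetLike.mem_coe, conjOrbitSubgroup, coe_mul_of_right_le_normalizer_left _ _ hH]
  simp only [Set.mem_mul, SetLike.mem_coe, MonoidHom.mem_range]
  constructor
  · rintro ⟨_, ⟨⟨t, ht⟩, rfl⟩, h, hh, rfl⟩
    exact ⟨t, ht, h, hh, rfl⟩
  · rintro ⟨t, ht, h, hh, rfl⟩
    exact ⟨_, ⟨⟨t, ht⟩, rfl⟩, h, hh, rfl⟩

theorem exists_conj_eq_iff_exists_mul_eq (hHT : H ≤ T) {y : G} :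
    (∃ t ∈ T, ∃ h ∈ H, t * (a * h) * t⁻¹ = y) ↔
      ∃ l ∈ conjOrbitSubgroup hN hab H a, a * l = y := by
  simp only [mem_conjOrbitSubgroup_iff hN hab a hHT]
  constructor
  · rintro ⟨t, ht, h, hh, rfl⟩
    exact ⟨_, ⟨t, ht, h, hh, rfl⟩,
      (conj_mul_eq_mul_commutatorElement a (hab t ht h (hHT hh))).symm⟩
  · rintro ⟨_, ⟨t, ht, h, hh, rfl⟩, rfl⟩
    exact ⟨t, ht, h, hh, conj_mul_eq_mul_commutatorElement a (hab t ht h (hHT hh))⟩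

theorem conjugates_coset_eq_iUnion (hHT : H ≤ T) :
    {x | ∃ g : G, ∃ h ∈ H, x = g * (a * h) * g⁻¹} =
      ⋃ q : G ⧸ T, {x | ∃ k ∈ (conjOrbitSubgroup hN hab H a).map (MulAut.conj q.out).toMonoidHom,
        x = q.out * a * q.out⁻¹ * k} := by
  have conj_mul (b l : G) : b * (a * l) * b⁻¹ = b * a * b⁻¹ * (b * l * b⁻¹) := by group
  ext x
  simp only [Set.mem_ofPred_eq, Set.mem_iUnion, mem_map, MulEquiv.coe_toMonoidHom,
    MulAut.conj_apply]
  constructor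
  · rintro ⟨g, h, hh, rfl⟩
    set b := (g : G ⧸ T).out
    have ht : b⁻¹ * g ∈ T := QuotientGroup.eq.mp (QuotientGroup.out_eq' _)
    obtain ⟨l, hl, hly⟩ := (exists_conj_eq_iff_exists_mul_eq hN hab a hHT).mp
      ⟨b⁻¹ * g, ht, h, hh, rfl⟩
    refine ⟨(g : G ⧸ T), _, ⟨l, hl, rfl⟩, ?_⟩
    rw [← conj_mul, hly]
    simp only [b]
    group
  · rintro ⟨q, _, ⟨l, hl, rfl⟩, rfl⟩
    obtain ⟨t, -, h, hh, hy⟩ := (exists_conj_eq_iff_exists_mul_eq hN hab a hHT).mpr ⟨l, hl, rfl⟩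
    refine ⟨q.out * t, h, hh, ?_⟩
    rw [← conj_mul, ← hy]
    group

end

end Subgroup

theorem stmt_8 (G : Type*) [Group G] (T : Subgroup G) (hN : T.Normal)
    (hab : ∀ x ∈ T, ∀ y ∈ T, x * y = y * x) (hfi : T.FiniteIndex)
    (H : Subgroup G) (hHT : H ≤ T) (a : G) :
    ∃ (m : ℕ) (c : Fin m → G) (K : Fin m → Subgroup G),
      (∀ i, K i ≤ T) ∧
      {x | ∃ g : G, ∃ h ∈ H, x = g * (a * h) * g⁻¹} =
        ⋃ i, {x | ∃ k ∈ K i, x = c i * k} := by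
  have : Finite (G ⧸ T) := T.finite_quotient_of_finiteIndex
  obtain ⟨m, ⟨e⟩⟩ := Finite.exists_equiv_fin (G ⧸ T)
  set b : Fin m → G := fun i ↦ (e.symm i).out
  refine ⟨m, fun i ↦ b i * a * (b i)⁻¹,
    fun i ↦ (Subgroup.conjOrbitSubgroup hN hab H a).map (MulAut.conj (b i)).toMonoidHom, ?_, ?_⟩
  · rintro i _ ⟨l, hl, rfl⟩
    exact hN.conj_mem l (Subgroup.conjOrbitSubgroup_le hN hab a hHT hl) (b i)
  · rw [Subgroup.conjugates_coset_eq_iUnion hN hab a hHT]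
    exact (e.symm.surjective.iUnion_comp _).symm
end

section
/- Let A be a commutative Banach algebra, and let I₀ ⊆ I and J₀ ⊆ J be ideals of A. Suppose there exist M > 0 and a net (u_α) of elements of I₀ with ‖u_α‖ ≤ M for all α and lim_α u_α·a = a (in norm) for every a ∈ I, and there exist M' > 0 and a net (v_β) of elements of J₀ with ‖v_β‖ ≤ M' for all β and lim_β v_β·b = b for every b ∈ J. Then there is a net (w_γ) of elements of I₀ ∩ J₀ with ‖w_γ‖ ≤ M·M' for all γ and lim_γ w_γ·c = c for every c ∈ I ∩ J; in particular, I ∩ J has a bounded approximate identity contained in I₀ ∩ J₀. (One may take the net (u_α·v_β) over the product directed set.) -/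
open Filter

theorem stmt_16 (A : Type*) [NormedCommRing A] [CompleteSpace A]
    (I I₀ J J₀ : Ideal A) (hI₀ : I₀ ≤ I) (hJ₀ : J₀ ≤ J)
    (ι : Type) [Preorder ι] [IsDirected ι (· ≤ ·)] [Nonempty ι]
    (ι' : Type) [Preorder ι'] [IsDirected ι' (· ≤ ·)] [Nonempty ι']
    (M M' : ℝ) (hM : 0 < M) (hM' : 0 < M')
    (u : ι → A) (hu₀ : ∀ α, u α ∈ I₀) (hub : ∀ α, ‖u α‖ ≤ M)
    (hulim : ∀ a ∈ I, Tendsto (fun α => u α * a) atTop (nhds a))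
    (v : ι' → A) (hv₀ : ∀ β, v β ∈ J₀) (hvb : ∀ β, ‖v β‖ ≤ M')
    (hvlim : ∀ b ∈ J, Tendsto (fun β => v β * b) atTop (nhds b)) :
    ∃ w : ι × ι' → A, (∀ γ, w γ ∈ I₀ ⊓ J₀) ∧ (∀ γ, ‖w γ‖ ≤ M * M') ∧
      ∀ c ∈ I ⊓ J, Tendsto (fun γ => w γ * c) atTop (nhds c) := by
  refine ⟨fun γ => u γ.1 * v γ.2, ?_, ?_, ?_⟩
  · intro γ
    exact ⟨I₀.mul_mem_right _ (hu₀ γ.1), J₀.mul_mem_left _ (hv₀ γ.2)⟩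
  · intro γ
    calc ‖u γ.1 * v γ.2‖ ≤ ‖u γ.1‖ * ‖v γ.2‖ := norm_mul_le _ _
      _ ≤ M * M' := mul_le_mul (hub _) (hvb _) (norm_nonneg _) hM.le
  · intro c hc
    have h1 : Tendsto (fun α => u α * c - c) atTop (nhds 0) := by
      simpa using (hulim c hc.1).sub (tendsto_const_nhds (x := c))
    have h2 : Tendsto (fun β => v β * c - c) atTop (nhds 0) := by
      simpa using (hvlim c hc.2).sub (tendsto_const_nhds (x := c))
    have hsnd : Tendsto (fun γ : ι × ι' => v γ.2 * c - c) atTop (nhds 0) := by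
      rw [← prod_atTop_atTop_eq]
      exact h2.comp tendsto_snd
    have hfst : Tendsto (fun γ : ι × ι' => u γ.1 * c - c) atTop (nhds 0) := by
      rw [← prod_atTop_atTop_eq]
      exact h1.comp tendsto_fst
    have h3 : Tendsto (fun γ : ι × ι' => u γ.1 * (v γ.2 * c - c)) atTop (nhds 0) := by
      refine squeeze_zero_norm (a := fun γ : ι × ι' => M * ‖v γ.2 * c - c‖)  (fun γ => ?_) ?_
      · calc ‖u γ.1 * (v γ.2 * c - c)‖ ≤ ‖u γ.1‖ * ‖v γ.2 * c - c‖ := norm_mul_le _ _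
          _ ≤ M * ‖v γ.2 * c - c‖ :=
            mul_le_mul_of_nonneg_right (hub _) (norm_nonneg _)
      · simpa using (tendsto_const_nhds (x := M)).mul hsnd.norm
    have h4 : Tendsto (fun γ : ι × ι' => u γ.1 * (v γ.2 * c - c) + (u γ.1 * c - c))
        atTop (nhds 0) := by
      simpa using h3.add hfst
    have h5 : Tendsto (fun γ : ι × ι' => u γ.1 * v γ.2 * c - c) atTop (nhds 0) := by
      convert h4 using 2 with γ
      ring
    have := h5.add (tendsto_const_nhds (x := c))
    simpa using this
end

section
/- Let A be a commutative complex Banach algebra, and let B be a finite group acting on A via a homomorphism into the group of continuous (bounded) algebra automorphisms of A; let A^B = { a ∈ A : β(a) = a for all β ∈ B } denote the fixed-point subalgebra. Let E be a set of characters of A (non-zero continuous multiplicative linear functionals A → ℂ), and suppose that the ideal I_A(E) = { a ∈ A : φ(a) = 0 for all φ ∈ E } has a bounded approximate identity. Then the ideal { a ∈ A^B : φ(a) = 0 for all φ ∈ E } of the Banach algebra A^B has a bounded approximate identity. -/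
/-- `S` admits a bounded approximate identity: a norm-bounded net `(w_γ)` of elements
of `S` with `w_γ · a → a` for every `a ∈ S`. -/
def HasBoundedApproximateIdentity {A : Type*} [NormedRing A] (S : Set A) : Prop :=
  ∃ (κ : Type) (p : Preorder κ), Nonempty κ ∧ IsDirected κ p.le ∧
    ∃ (M : ℝ) (w : κ → A), 0 < M ∧ (∀ γ, w γ ∈ S ∧ ‖w γ‖ ≤ M) ∧
      ∀ a ∈ S, Filter.Tendsto (fun γ => w γ * a) (@Filter.atTop κ p) (nhds a)

theorem stmt_17 (A : Type*) [NormedCommRing A] [NormedAlgebra ℂ A] [CompleteSpace A]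
    (B : Type*) [Group B] [Finite B]
    (φ : B →* (A ≃ₐ[ℂ] A)) (hcont : ∀ β : B, Continuous ⇑(φ β))
    (E : Set (WeakDual.characterSpace ℂ A))
    (hbai : HasBoundedApproximateIdentity {a : A | ∀ χ ∈ E, χ a = 0}) :
    HasBoundedApproximateIdentity
      {a : A | (∀ β : B, φ β a = a) ∧ ∀ χ ∈ E, χ a = 0} := by
  classical
  obtain ⟨κ, p, hne, hdir, M, w, hM, hw, htend⟩ := hbai
  letI := p
  have := Fintype.ofFinite B
  set n := Fintype.card B with hn
  have hn0 : 0 < n := Fintype.card_pos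
  have hnC : (n : ℂ) ≠ 0 := by exact_mod_cast hn0.ne'
  -- a uniform bound for the automorphisms
  let F : B → A →L[ℂ] A := fun β => ⟨(φ β).toLinearMap, hcont β⟩
  obtain ⟨C, hC1, hC⟩ : ∃ C : ℝ, 1 ≤ C ∧ ∀ (β : B) (x : A), ‖φ β x‖ ≤ C * ‖x‖ := by
    refine ⟨1 + ∑ β : B, ‖F β‖,
      le_add_of_nonneg_right (Finset.sum_nonneg fun _ _ => norm_nonneg _), fun β x => ?_⟩
    calc ‖φ β x‖ = ‖F β x‖ := rfl
      _ ≤ ‖F β‖ * ‖x‖ := (F β).le_opNorm x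
      _ ≤ (1 + ∑ β' : B, ‖F β'‖) * ‖x‖ := by
          apply mul_le_mul_of_nonneg_right _ (norm_nonneg _)
          have h1 : ‖F β‖ ≤ ∑ β' : B, ‖F β'‖ :=
            Finset.single_le_sum (fun i _ => norm_nonneg (F i)) (Finset.mem_univ β)
          linarith
  have hC0 : (0:ℝ) < C := lt_of_lt_of_le one_pos hC1
  have hCM : (0:ℝ) < C * M := mul_pos hC0 hM
  let u : κ → A := fun γ => ∏ β : B, φ β (w γ)
  let v : κ → A := fun γ => (n : ℂ)⁻¹ • ∑ β : B, φ β (u γ)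
  have hwbound : ∀ (γ) (β : B), ‖φ β (w γ)‖ ≤ C * M := fun γ β =>
    (hC β (w γ)).trans (mul_le_mul_of_nonneg_left (hw γ).2 hC0.le)
  have hubound : ∀ γ, ‖u γ‖ ≤ (C * M) ^ n := by
    intro γ
    calc ‖u γ‖ ≤ ∏ β : B, ‖φ β (w γ)‖ :=
          Finset.norm_prod_le' Finset.univ Finset.univ_nonempty _
      _ ≤ ∏ _β : B, (C * M) :=
          Finset.prod_le_prod (fun i _ => norm_nonneg _) (fun i _ => hwbound γ i)
      _ = (C * M) ^ n := by simp [hn]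
  -- the candidate bound
  refine ⟨κ, p, hne, hdir, C * (C * M) ^ n, v, by positivity, fun γ => ⟨⟨?_, ?_⟩, ?_⟩, ?_⟩
  · -- fixed by the group action
    intro β₀
    show φ β₀ ((n : ℂ)⁻¹ • ∑ β : B, φ β (u γ)) = (n : ℂ)⁻¹ • ∑ β : B, φ β (u γ)
    rw [map_smul, map_sum]
    congr 1
    have : ∀ β : B, φ β₀ (φ β (u γ)) = φ (β₀ * β) (u γ) := by
      intro β; rw [map_mul φ]; rfl
    simp_rw [this]
    exact Fintype.sum_equiv (Equiv.mulLeft β₀) _ _ (fun β => rfl)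
  · -- vanishes on E
    intro χ hχ
    show χ ((n : ℂ)⁻¹ • ∑ β : B, φ β (u γ)) = 0
    rw [map_smul, map_sum]
    have hterm : ∀ β' : B, χ (φ β' (u γ)) = 0 := by
      intro β'
      have h1 : χ (φ β' (u γ)) = ∏ β : B, χ (φ (β' * β) (w γ)) := by
        show χ (φ β' (∏ β : B, φ β (w γ))) = _
        rw [map_prod, map_prod]
        refine Finset.prod_congr rfl fun β _ => ?_
        congr 1
        rw [map_mul φ]; rfl
      rw [h1]
      refine Finset.prod_eq_zero (Finset.mem_univ β'⁻¹) ?_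
      rw [mul_inv_cancel, map_one φ]
      exact (hw γ).1 χ hχ
    simp [hterm]
  · -- norm bound
    have h1 : ‖∑ β : B, φ β (u γ)‖ ≤ n * (C * (C * M) ^ n) := by
      calc ‖∑ β : B, φ β (u γ)‖ ≤ ∑ β : B, ‖φ β (u γ)‖ := norm_sum_le _ _
        _ ≤ ∑ _β : B, C * (C * M) ^ n := by
            refine Finset.sum_le_sum fun β _ => ?_
            exact (hC β (u γ)).trans (mul_le_mul_of_nonneg_left (hubound γ) hC0.le)
        _ = n * (C * (C * M) ^ n) := by simp [hn, mul_comm]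
    calc ‖v γ‖ = ‖(n : ℂ)⁻¹‖ * ‖∑ β : B, φ β (u γ)‖ := norm_smul _ _
      _ = (n : ℝ)⁻¹ * ‖∑ β : B, φ β (u γ)‖ := by
          norm_num
      _ ≤ (n : ℝ)⁻¹ * (n * (C * (C * M) ^ n)) := by
          exact mul_le_mul_of_nonneg_left h1 (by positivity)
      _ = C * (C * M) ^ n := by
          field_simp
  · -- approximate identity property
    intro a ha
    obtain ⟨hafix, hazero⟩ := ha
    have hwa : Filter.Tendsto (fun γ => w γ * a) Filter.atTop (nhds a) := htend a hazero
    have key : ∀ s : Finset B,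
        Filter.Tendsto (fun γ => (∏ β ∈ s, φ β (w γ)) * a) Filter.atTop (nhds a) := by
      intro s
      induction s using Finset.induction with
      | empty =>
        simp only [Finset.prod_empty, one_mul]
        exact tendsto_const_nhds
      | @insert β₀ s hβs ih =>
        have h2 : Filter.Tendsto (fun γ => φ β₀ (w γ) * a) Filter.atTop (nhds a) := by
          have h3 : ∀ γ, φ β₀ (w γ) * a = φ β₀ (w γ * a) := by
            intro γ; rw [map_mul, hafix β₀]
          have h4 := ((hcont β₀).tendsto a).comp hwa
          rw [hafix β₀] at h4
          exact h4.congr fun γ => (h3 γ).symm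
        have h4 : Filter.Tendsto
            (fun γ => φ β₀ (w γ) * ((∏ β ∈ s, φ β (w γ)) * a - a)) Filter.atTop (nhds 0) := by
          have hb : ∀ γ, ‖φ β₀ (w γ) * ((∏ β ∈ s, φ β (w γ)) * a - a)‖ ≤
              (C * M) * ‖(∏ β ∈ s, φ β (w γ)) * a - a‖ := by
            intro γ
            calc ‖φ β₀ (w γ) * ((∏ β ∈ s, φ β (w γ)) * a - a)‖
                ≤ ‖φ β₀ (w γ)‖ * ‖(∏ β ∈ s, φ β (w γ)) * a - a‖ := norm_mul_le _ _
              _ ≤ (C * M) * ‖(∏ β ∈ s, φ β (w γ)) * a - a‖ :=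
                  mul_le_mul_of_nonneg_right (hwbound γ β₀) (norm_nonneg _)
          refine squeeze_zero_norm hb ?_
          have h5 : Filter.Tendsto (fun γ => (∏ β ∈ s, φ β (w γ)) * a - a)
                Filter.atTop (nhds 0) := by
            simpa using ih.sub (tendsto_const_nhds (x := a))
          simpa using (h5.norm.const_mul (C * M))
        have h6 := h4.add h2
        rw [zero_add] at h6
        refine h6.congr fun γ => ?_
        rw [Finset.prod_insert hβs]
        ring
    have hu : Filter.Tendsto (fun γ => u γ * a) Filter.atTop (nhds a) := key Finset.univ
    have hβ' : ∀ β' : B, Filter.Tendsto (fun γ => φ β' (u γ * a)) Filter.atTop (nhds a) := by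
      intro β'
      have h7 := ((hcont β').tendsto a).comp hu
      rw [hafix β'] at h7
      exact h7.congr fun γ => by rw [Function.comp_apply]
    have hsum : Filter.Tendsto (fun γ => ∑ β' : B, φ β' (u γ * a))
        Filter.atTop (nhds ((n : ℂ) • a)) := by
      have := tendsto_finset_sum (Finset.univ : Finset B) (fun β' _ => hβ' β')
      simpa [Finset.sum_const, hn, ← Nat.cast_smul_eq_nsmul ℂ] using this
    have hfin : Filter.Tendsto (fun γ => (n : ℂ)⁻¹ • ∑ β' : B, φ β' (u γ * a))
        Filter.atTop (nhds a) := by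
      have := hsum.const_smul ((n : ℂ)⁻¹)
      rwa [smul_smul, inv_mul_cancel₀ hnC, one_smul] at this
    refine hfin.congr fun γ => ?_
    show (n : ℂ)⁻¹ • ∑ β' : B, φ β' (u γ * a) = ((n : ℂ)⁻¹ • ∑ β' : B, φ β' (u γ)) * a
    rw [smul_mul_assoc, Finset.sum_mul]
    congr 1
    refine Finset.sum_congr rfl fun β' _ => ?_
    rw [map_mul, hafix β']
end

section
/- Let A be a commutative unital complex Banach algebra which is semisimple (its Gelfand transform is injective) and regular on its character space X, in the sense that for every weak*-closed subset E of X and every character φ ∈ X with φ ∉ E there exists a ∈ A with φ(a) = 1 and ψ(a) = 0 for all ψ ∈ E. Let B be a finite group acting on A via a homomorphism into the group of continuous (bounded) algebra automorphisms of A, and let A^B = { a ∈ A : β(a) = a for all β ∈ B } be the fixed-point subalgebra. Then every character of A^B (every unital multiplicative linear functional χ : A^B → ℂ) is the restriction to A^B of some character of A; consequently the character space of A^B is identified with the orbit space X/B. -/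
/-!
A is integral over the fixed-point algebra A^B of a finite group: each a ∈ A is a root of the
monic polynomial ∏_{β ∈ B} (X - β a), whose coefficients are B-invariant. By lying-over, the
maximal ideal ker χ of A^B is the contraction of a maximal ideal M of A, and the character of A
with kernel M restricts to χ.
-/

open WeakDual

theorem Subalgebra.isIntegral_of_forall_mem_iff_fixed {R A G : Type*} [CommRing R] [CommRing A]
    [Algebra R A] [Group G] [Finite G] [MulSemiringAction G A] (S : Subalgebra R A)
    (hS : ∀ a : A, a ∈ S ↔ ∀ g : G, g • a = a) : Algebra.IsIntegral S A :=
  have : Algebra.IsInvariant S A G := ⟨fun a ha => ⟨⟨a, (hS a).2 ha⟩, rfl⟩⟩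
  Algebra.IsInvariant.isIntegral S A G

theorem Subalgebra.exists_characterSpace_restrict_eq_of_isIntegral {A : Type*}
    [NormedCommRing A] [NormedAlgebra ℂ A] [CompleteSpace A] (S : Subalgebra ℂ A)
    [Algebra.IsIntegral S A] (χ : S →ₐ[ℂ] ℂ) :
    ∃ ψ : characterSpace ℂ A, ∀ a : S, χ a = ψ (a : A) := by
  have hχ : Function.Surjective χ := fun z => ⟨algebraMap ℂ S z, χ.commutes z⟩
  have := RingHom.ker_isMaximal_of_surjective (χ : S →+* ℂ) hχ
  have hker : RingHom.ker (algebraMap S A) ≤ RingHom.ker (χ : S →+* ℂ) := by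
    rw [(RingHom.injective_iff_ker_eq_bot _).mp Subtype.val_injective]
    exact bot_le
  obtain ⟨M, hM, hMχ⟩ := Ideal.exists_ideal_over_maximal_of_isIntegral _ hker
  refine ⟨M.toCharacterSpace, fun a => ?_⟩
  have hmem : (a : A) - algebraMap ℂ A (χ a) ∈ M := by
    have : a - algebraMap ℂ S (χ a) ∈ RingHom.ker (χ : S →+* ℂ) := by
      simp [RingHom.mem_ker]
    rw [← hMχ, Ideal.mem_comap] at this
    simpa using this
  have := M.toCharacterSpace_apply_eq_zero_of_mem hmem
  rw [map_sub, AlgHomClass.commutes, sub_eq_zero] at this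
  exact this.symm

theorem stmt_18_general (A : Type*) [NormedCommRing A] [NormedAlgebra ℂ A] [CompleteSpace A]
    -- a finite group acting by continuous algebra automorphisms
    (B : Type*) [Group B] [Finite B]
    (π : B →* (A ≃ₐ[ℂ] A))
    -- the fixed-point subalgebra
    (S : Subalgebra ℂ A) (hS : ∀ a : A, a ∈ S ↔ ∀ β : B, π β a = a)
    -- a character of the fixed-point subalgebra
    (χ : S →ₐ[ℂ] ℂ) :
    ∃ ψ : WeakDual.characterSpace ℂ A, ∀ a : S, χ a = ψ (a : A) := by
  let := MulSemiringAction.compHom A π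
  have := S.isIntegral_of_forall_mem_iff_fixed (G := B) hS
  exact S.exists_characterSpace_restrict_eq_of_isIntegral χ

theorem stmt_18 (A : Type*) [NormedCommRing A] [NormedAlgebra ℂ A] [CompleteSpace A]
    -- semisimplicity: the Gelfand transform is injective
    (hss : Function.Injective ⇑(WeakDual.gelfandTransform ℂ A))
    -- regularity on the character space
    (hreg : ∀ E : Set (WeakDual.characterSpace ℂ A), IsClosed E →
      ∀ φ : WeakDual.characterSpace ℂ A, φ ∉ E →
        ∃ a : A, φ a = 1 ∧ ∀ ψ ∈ E, ψ a = 0)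
    -- a finite group acting by continuous algebra automorphisms
    (B : Type*) [Group B] [Finite B]
    (π : B →* (A ≃ₐ[ℂ] A)) (hcont : ∀ β : B, Continuous ⇑(π β))
    -- the fixed-point subalgebra
    (S : Subalgebra ℂ A) (hS : ∀ a : A, a ∈ S ↔ ∀ β : B, π β a = a)
    -- a character of the fixed-point subalgebra
    (χ : S →ₐ[ℂ] ℂ) :
    ∃ ψ : WeakDual.characterSpace ℂ A, ∀ a : S, χ a = ψ (a : A) :=
  stmt_18_general A B π S hS χ
end
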